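/- Let β ≥ 1. Then for every x > 0 the inequality ψ(x + β) ≤ ln x + (β − 1/2)/x holds. -/

import Mathlib

open Real

/-- The psi (digamma) function: the derivative of `ln ∘ Γ`. -/
noncomputable def psi : ℝ → ℝ := deriv (fun x : ℝ => Real.log (Real.Gamma x))

/-!
Convexity of `log Γ` and `Γ(y + 1) = y Γ(y)` give `ψ(y) ≤ log y`. The gap
`log z - 1/(2z) - ψ(z)` decreases under `z ↦ z + 1`, because `ψ(z + 1) = ψ(z) + 1/z` and the
trapezoidal rule overestimates `log (z + 1) - log z = ∫ dt/t` (`1/t` is convex). Comparing `z`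
with `z + n` and letting `n → ∞` yields `ψ(z) ≤ log z - 1/(2z)`. For `z = x + β` it remains to
bound `log (x + β) - log x` by the same inequality `log s ≤ (s - s⁻¹)/2` (`s ≥ 1`) that gives the
trapezoidal estimate; the final algebra reduces to `β (β - 1) ≥ 0`.
-/

lemma log_le_half_sub_inv {s : ℝ} (hs : 1 ≤ s) : log s ≤ (s - s⁻¹) / 2 := by
  rw [← sinh_log (by linarith)]
  rcases (log_nonneg hs).eq_or_lt with h | h
  · rw [← h, sinh_zero]
  · exact (self_lt_sinh_iff.mpr h).le

lemma log_add_one_sub_log_le {a : ℝ} (ha : 0 < a) :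
    log (a + 1) - log a ≤ (1 / a + 1 / (a + 1)) / 2 := by
  have hs : 1 ≤ (a + 1) / a := by rw [le_div_iff₀ ha]; linarith
  have h := log_le_half_sub_inv hs
  rw [log_div (by linarith) ha.ne', inv_div] at h
  convert h using 1
  field_simp
  ring

lemma differentiableAt_log_Gamma {y : ℝ} (hy : 0 < y) :
    DifferentiableAt ℝ (fun x : ℝ => log (Gamma x)) y :=
  (differentiableAt_Gamma fun m => by linarith [(Nat.cast_nonneg m : (0 : ℝ) ≤ m)]).log
    (Gamma_pos_of_pos hy).ne'

lemma log_Gamma_add_one {y : ℝ} (hy : 0 < y) : log (Gamma (y + 1)) = log y + log (Gamma y) := by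
  rw [Gamma_add_one hy.ne', log_mul hy.ne' (Gamma_pos_of_pos hy).ne']

lemma psi_le_log {y : ℝ} (hy : 0 < y) : psi y ≤ log y := by
  have h := convexOn_log_Gamma.deriv_le_slope (Set.mem_Ioi.mpr hy)
    (Set.mem_Ioi.mpr (by linarith : (0 : ℝ) < y + 1)) (by linarith)
    (differentiableAt_log_Gamma hy)
  rwa [slope_def_field, Function.comp_apply, Function.comp_apply, log_Gamma_add_one hy,
    add_sub_cancel_right, add_sub_cancel_left, div_one] at h

lemma psi_add_one {y : ℝ} (hy : 0 < y) : psi (y + 1) = psi y + 1 / y := by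
  have hshift : HasDerivAt (fun x : ℝ => log (Gamma (x + 1))) (psi (y + 1)) y := by
    exact (differentiableAt_log_Gamma (by linarith)).hasDerivAt.comp_add_const y 1
  have hsum : HasDerivAt (fun x : ℝ => log x + log (Gamma x)) (y⁻¹ + psi y) y :=
    (hasDerivAt_log hy.ne').add (differentiableAt_log_Gamma hy).hasDerivAt
  have heq : (fun x : ℝ => log (Gamma (x + 1))) =ᶠ[nhds y] fun x => log x + log (Gamma x) := by
    filter_upwards [Ioi_mem_nhds hy] with t ht using log_Gamma_add_one ht
  rw [(hshift.congr_of_eventuallyEq heq.symm).unique hsum, add_comm, one_div]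

lemma log_sub_psi_add_nat_le {z : ℝ} (hz : 0 < z) (n : ℕ) :
    log (z + n) - 1 / (2 * (z + n)) - psi (z + n) ≤ log z - 1 / (2 * z) - psi z := by
  induction n with
  | zero => simp
  | succ n ih =>
    have hzn : 0 < z + n := by positivity
    have hstep := log_add_one_sub_log_le hzn
    rw [Nat.cast_succ, ← add_assoc, psi_add_one hzn]
    have : 1 / (2 * (z + n)) = 1 / (z + n) / 2 := by field_simp
    have : 1 / (2 * (z + n + 1)) = 1 / (z + n + 1) / 2 := by field_simp
    linarith

lemma psi_le_log_sub_inv_two_mul {z : ℝ} (hz : 0 < z) : psi z ≤ log z - 1 / (2 * z) := by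
  have hbound (n : ℕ) : psi z ≤ log z - 1 / (2 * z) + 1 / (2 * (z + n)) := by
    linarith [log_sub_psi_add_nat_le hz n, psi_le_log (by positivity : 0 < z + n)]
  have hlim : Filter.Tendsto (fun n : ℕ => (2 * (z + n))⁻¹) Filter.atTop (nhds 0) :=
    (Filter.Tendsto.const_mul_atTop two_pos
      (Filter.tendsto_atTop_add_const_left _ z tendsto_natCast_atTop_atTop)).inv_tendsto_atTop
  exact ge_of_tendsto' (by simpa [one_div] using tendsto_const_nhds.add hlim) hbound

theorem stmt_8 (β : ℝ) (hβ : 1 ≤ β) (x : ℝ) (hx : 0 < x) :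
    psi (x + β) ≤ Real.log x + (β - 1 / 2) / x := by
  have hz : 0 < x + β := by linarith
  have hpsi := psi_le_log_sub_inv_two_mul hz
  have hlog := log_le_half_sub_inv (s := (x + β) / x) (by rw [le_div_iff₀ hx]; linarith)
  rw [log_div hz.ne' hx.ne', inv_div] at hlog
  have halg : ((x + β) / x - x / (x + β)) / 2 - 1 / (2 * (x + β)) ≤ (β - 1 / 2) / x := by
    rw [← sub_nonneg]
    have : (β - 1 / 2) / x - (((x + β) / x - x / (x + β)) / 2 - 1 / (2 * (x + β))) =
        β * (β - 1) / (2 * x * (x + β)) := by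
      field_simp
      ring
    rw [this]
    exact div_nonneg (mul_nonneg (by linarith) (by linarith)) (by positivity)
  linarith
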